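/- arXiv:1608.04315 — 5 statements merged into one kernel-verified Lean document; each statement's English description precedes it below -/
import Mathlib

section
/- For every complex number α and every positive integer k with α + k ≠ 0, the terminating hypergeometric sum satisfies ∑_{n=0}^{k-1} [(α)_n (1-k)_n / ((-k)_n · n!)] · (k/(α+k))^n = [(α+1)_k / k!] · (k/(α+k))^k. -/
/-!
Since `a (a+1)_n = (a)_n (a+n)`, taking `a = -k` gives `(1-k)_n / (-k)_n = (k-n)/k`, so the
summands are `(α)_n (k-n) xⁿ / (k n!)` with `x = k/(α+k)`. The relation `(α+k) x = k` is exactly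
what makes these the differences of `(α+1)_m xᵐ / m!` (Gosper's telescoping), and the summand
for `n = k` vanishes, so the sum over `n < k` is the value of that antidifference at `m = k`.
-/

open Finset Polynomial Nat

theorem ascPochhammer_succ_eval_left {S : Type*} [CommSemiring S] (n : ℕ) (a : S) :
    (ascPochhammer S (n + 1)).eval a = a * (ascPochhammer S n).eval (a + 1) := by
  simp [ascPochhammer_succ_left, eval_comp]

theorem mul_ascPochhammer_eval_add_one {S : Type*} [CommSemiring S] (n : ℕ) (a : S) :
    a * (ascPochhammer S n).eval (a + 1) = (ascPochhammer S n).eval a * (a + n) := by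
  rw [← ascPochhammer_succ_eval_left, ascPochhammer_succ_eval]

theorem ascPochhammer_eval_neg_natCast_ne_zero {R : Type*} [CommRing R] [IsDomain R] [CharZero R]
    {n k : ℕ} (h : n ≤ k) : (ascPochhammer R n).eval (-(k : R)) ≠ 0 := by
  rw [Ne, ascPochhammer_eval_eq_zero_iff, neg_neg]
  rintro ⟨j, hj, hjk⟩
  exact (Nat.cast_injective hjk).not_lt (by omega)

theorem ascPochhammer_eval_one_sub_div_eval_neg {K : Type*} [Field K] (n : ℕ) {c : K}
    (hc : c ≠ 0) (hn : (ascPochhammer K n).eval (-c) ≠ 0) :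
    (ascPochhammer K n).eval (1 - c) / (ascPochhammer K n).eval (-c) = (c - n) / c := by
  have := mul_ascPochhammer_eval_add_one n (-c)
  rw [neg_add_eq_sub] at this
  rw [div_eq_div_iff hn hc]
  linear_combination -this

theorem sum_range_succ_ascPochhammer_eval_mul_sub_div_factorial {K : Type*} [Field K] [CharZero K]
    {α c x : K}
    (hx : (α + c) * x = c) (m : ℕ) :
    ∑ n ∈ range (m + 1), (ascPochhammer K n).eval α * (c - n) / n ! * x ^ n
      = c * ((ascPochhammer K m).eval (α + 1) / m ! * x ^ m) := by
  induction m with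
  | zero => simp
  | succ m ih =>
    rw [sum_range_succ, ih, ascPochhammer_succ_eval_left, ascPochhammer_succ_eval, factorial_succ]
    have hfac : (m ! : K) ≠ 0 := Nat.cast_ne_zero.mpr m.factorial_ne_zero
    push_cast
    field_simp
    linear_combination -(ascPochhammer K m).eval (α + 1) * x ^ m * (m + 1) * hx

/-- Gosper-type evaluation of the terminating hypergeometric series
`₂F₁(α, 1-k; -k; k/(α+k))`:
`∑_{n=0}^{k-1} (α)_n (1-k)_n / ((-k)_n n!) (k/(α+k))^n = (α+1)_k / k! * (k/(α+k))^k`. -/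
theorem gosper_terminating_eval (α : ℂ) (k : ℕ) (hk : 1 ≤ k) (h : α + k ≠ 0) :
    ∑ n ∈ Finset.range k,
      ((ascPochhammer ℂ n).eval α * (ascPochhammer ℂ n).eval (1 - (k : ℂ)) /
        ((ascPochhammer ℂ n).eval (-(k : ℂ)) * (n.factorial : ℂ))) * ((k : ℂ) / (α + k)) ^ n
    = ((ascPochhammer ℂ k).eval (α + 1) / (k.factorial : ℂ)) * ((k : ℂ) / (α + k)) ^ k := by
  set x : ℂ := k / (α + k)
  have hk0 : (k : ℂ) ≠ 0 := Nat.cast_ne_zero.mpr (by omega)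
  have hx : (α + k) * x = k := mul_div_cancel₀ _ h
  have hterm : ∀ n ∈ range k,
      (ascPochhammer ℂ n).eval α * (ascPochhammer ℂ n).eval (1 - (k : ℂ)) /
          ((ascPochhammer ℂ n).eval (-(k : ℂ)) * (n ! : ℂ)) * x ^ n
        = (ascPochhammer ℂ n).eval α * (k - n) / n ! * x ^ n / k := by
    intro n hn
    have hpoch := ascPochhammer_eval_neg_natCast_ne_zero (R := ℂ) (mem_range.mp hn).le
    rw [mul_div_assoc, ← div_div, mul_div_assoc,
      ascPochhammer_eval_one_sub_div_eval_neg n hk0 hpoch]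
    ring
  have hsum : ∑ n ∈ range k, (ascPochhammer ℂ n).eval α * (k - n) / n ! * x ^ n
      = k * ((ascPochhammer ℂ k).eval (α + 1) / k ! * x ^ k) := by
    rw [← sum_range_succ_ascPochhammer_eval_mul_sub_div_factorial hx k, sum_range_succ]
    simp
  rw [sum_congr rfl hterm, ← sum_div, hsum, mul_div_cancel_left₀ _ hk0]
end

section
/- Let α and k be complex numbers with α ≠ 0, α + k ≠ 0, k+2 not a nonpositive integer, and |k/(α+k)| < 1. Then the convergent series ∑_{n=0}^∞ [(α+k+1)_n (2)_n / ((k+2)_n · n!)] · (k/(α+k))^n equals (α+k)(k+1)/α. -/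
/-!
Because `(2)ₙ = (n + 1)!`, the `n`-th term of `₂F₁(a, 2; c; x)` is `tₙ = (n + 1) (a)ₙ / (c)ₙ xⁿ`.
For `Gₙ = (c - 1 + n) (a)ₙ / (c)ₙ xⁿ / (1 - x)` one finds
`Gₙ - Gₙ₊₁ = (a)ₙ / (c)ₙ xⁿ ((c - 1 + n) - (a + n) x) / (1 - x)`, and the bracket is
`(1 - x)(n + 1)` exactly when `(a - 1) x = c - 2`; then `tₙ = Gₙ - Gₙ₊₁` telescopes.
For `|x| < 1` the series converges by the ratio test, `Gₙ` is an asymptotically constant multiple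
of `tₙ` and so tends to `0`, and the sum is `G₀ = (c - 1) / (1 - x)`.
Gosper's case is `a = α + k + 1`, `c = k + 2`, `x = k / (α + k)`.
-/

open Filter Topology

lemma ascPochhammer_eval_two (S : Type*) [Semiring S] (n : ℕ) :
    (ascPochhammer S n).eval 2 = ((n + 1).factorial : S) := by
  simpa [add_comm, one_add_one_eq_two] using factorial_mul_ascPochhammer S 1 n

lemma ascPochhammer_eval_succ_div (K : Type*) [Field K] (a c : K) (n : ℕ) :
    (ascPochhammer K (n + 1)).eval a / (ascPochhammer K (n + 1)).eval c =
      (ascPochhammer K n).eval a / (ascPochhammer K n).eval c * ((a + n) / (c + n)) := by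
  rw [ascPochhammer_succ_eval, ascPochhammer_succ_eval, mul_div_mul_comm]

lemma summable_of_succ_eq_mul_of_tendsto {𝕜 : Type*} [NormedField 𝕜] [CompleteSpace 𝕜]
    {f g : ℕ → 𝕜} {q : 𝕜} (hq : ‖q‖ < 1) (hg : Tendsto g atTop (𝓝 q))
    (hf : ∀ n, f (n + 1) = g n * f n) : Summable f := by
  obtain ⟨r, hqr, hr⟩ := exists_between hq
  refine summable_of_ratio_norm_eventually_le hr ?_
  filter_upwards [hg.norm.eventually_lt_const hqr] with n hn
  rw [hf, norm_mul]
  exact mul_le_mul_of_nonneg_right hn.le (norm_nonneg _)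

lemma tendsto_add_natCast_div_add_natCast {𝕜 : Type*} [RCLike 𝕜] (a c : 𝕜) :
    Tendsto (fun n : ℕ => (a + n) / (c + n)) atTop (𝓝 1) := by
  simpa using tendsto_add_mul_div_add_mul_atTop_nhds a c 1 one_ne_zero

section
variable {𝕜 : Type*} [RCLike 𝕜] {a c x : 𝕜}

variable (a c x) in
noncomputable def hypergeomTwoTerm (n : ℕ) : 𝕜 :=
  (n + 1) * ((ascPochhammer 𝕜 n).eval a / (ascPochhammer 𝕜 n).eval c) * x ^ n

variable (a c x) in
noncomputable def gosperCertificate (n : ℕ) : 𝕜 :=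
  (c - 1 + n) * ((ascPochhammer 𝕜 n).eval a / (ascPochhammer 𝕜 n).eval c) * x ^ n / (1 - x)

lemma hypergeomTwoTerm_succ (n : ℕ) :
    hypergeomTwoTerm a c x (n + 1) =
      x * ((a + n) / (c + n)) * ((2 + n) / (1 + n)) * hypergeomTwoTerm a c x n := by
  have h1n : (1 + n : 𝕜) ≠ 0 := by rw [add_comm]; exact Nat.cast_add_one_ne_zero n
  simp only [hypergeomTwoTerm, ascPochhammer_eval_succ_div, pow_succ]
  generalize (ascPochhammer 𝕜 n).eval a / (ascPochhammer 𝕜 n).eval c = P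
  push_cast
  field_simp
  ring

lemma summable_hypergeomTwoTerm (hx : ‖x‖ < 1) : Summable (hypergeomTwoTerm a c x) := by
  refine summable_of_succ_eq_mul_of_tendsto hx ?_ hypergeomTwoTerm_succ
  simpa using ((tendsto_add_natCast_div_add_natCast a c).const_mul x).mul
    (tendsto_add_natCast_div_add_natCast 2 1)

lemma hypergeomTwoTerm_eq_sub {n : ℕ} (hcn : c + n ≠ 0) (hx : x ≠ 1)
    (hacx : (a - 1) * x = c - 2) :
    hypergeomTwoTerm a c x n = gosperCertificate a c x n - gosperCertificate a c x (n + 1) := by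
  have h1x : 1 - x ≠ 0 := sub_ne_zero.mpr hx.symm
  simp only [hypergeomTwoTerm, gosperCertificate, ascPochhammer_eval_succ_div, pow_succ]
  generalize (ascPochhammer 𝕜 n).eval a / (ascPochhammer 𝕜 n).eval c = P
  push_cast
  field_simp
  linear_combination P * x ^ n * (n + c) * hacx

lemma gosperCertificate_eq_mul (n : ℕ) :
    gosperCertificate a c x n =
      (c - 1 + n) / (1 + n) / (1 - x) * hypergeomTwoTerm a c x n := by
  have h1n : (1 + n : 𝕜) ≠ 0 := by rw [add_comm]; exact Nat.cast_add_one_ne_zero n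
  simp only [hypergeomTwoTerm, gosperCertificate]
  field_simp
  ring

lemma tendsto_gosperCertificate_zero (hx : ‖x‖ < 1) :
    Tendsto (gosperCertificate a c x) atTop (𝓝 0) := by
  have h := ((tendsto_add_natCast_div_add_natCast (c - 1) 1).div_const (1 - x)).mul
    (summable_hypergeomTwoTerm (a := a) (c := c) hx).tendsto_atTop_zero
  simpa only [mul_zero, ← gosperCertificate_eq_mul] using h

theorem hasSum_hypergeomTwoTerm (hc : ∀ n : ℕ, c + n ≠ 0) (hx : ‖x‖ < 1)
    (hacx : (a - 1) * x = c - 2) :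
    HasSum (hypergeomTwoTerm a c x) ((c - 1) / (1 - x)) := by
  have hx1 : x ≠ 1 := by rintro rfl; simp at hx
  rw [(summable_hypergeomTwoTerm hx).hasSum_iff_tendsto_nat]
  have hpartial : ∀ N, ∑ n ∈ Finset.range N, hypergeomTwoTerm a c x n =
      gosperCertificate a c x 0 - gosperCertificate a c x N := fun N => by
    rw [← Finset.sum_range_sub']
    exact Finset.sum_congr rfl fun n _ => hypergeomTwoTerm_eq_sub (hc n) hx1 hacx
  have h0 : gosperCertificate a c x 0 = (c - 1) / (1 - x) := by simp [gosperCertificate]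
  simpa [hpartial, h0] using
    (tendsto_gosperCertificate_zero hx).const_sub (gosperCertificate a c x 0)

end

theorem gosper_strange_eval_general (α k : ℂ) (hαk : α + k ≠ 0)
    (hk : ∀ m : ℕ, k + 2 ≠ -(m : ℂ)) (hx : ‖k / (α + k)‖ < 1) :
    ∑' n : ℕ, ((ascPochhammer ℂ n).eval (α + k + 1) * (ascPochhammer ℂ n).eval 2 /
        ((ascPochhammer ℂ n).eval (k + 2) * (n.factorial : ℂ))) * (k / (α + k)) ^ n
    = (α + k) * (k + 1) / α := by
  have hc : ∀ n : ℕ, k + 2 + n ≠ 0 := fun n h => hk n (eq_neg_of_add_eq_zero_left h)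
  have hacx : (α + k + 1 - 1) * (k / (α + k)) = k + 2 - 2 := by
    rw [add_sub_cancel_right, add_sub_cancel_right, mul_div_cancel₀ _ hαk]
  have hterm : ∀ n : ℕ, (ascPochhammer ℂ n).eval (α + k + 1) * (ascPochhammer ℂ n).eval 2 /
      ((ascPochhammer ℂ n).eval (k + 2) * (n.factorial : ℂ)) * (k / (α + k)) ^ n =
      hypergeomTwoTerm (α + k + 1) (k + 2) (k / (α + k)) n := fun n => by
    rw [hypergeomTwoTerm, ascPochhammer_eval_two, Nat.factorial_succ]
    have hfac : (n.factorial : ℂ) ≠ 0 := Nat.cast_ne_zero.mpr n.factorial_ne_zero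
    push_cast
    field_simp
  simp only [hterm, (hasSum_hypergeomTwoTerm hc hx hacx).tsum_eq]
  rw [one_sub_div hαk, add_sub_cancel_right, div_div_eq_mul_div]
  ring

/-- Gosper's strange evaluation:
`₂F₁(α+k+1, 2; k+2; k/(α+k)) = (α+k)(k+1)/α` in the region of absolute convergence. -/
theorem gosper_strange_eval (α k : ℂ) (hα : α ≠ 0) (hαk : α + k ≠ 0)
    (hk : ∀ m : ℕ, k + 2 ≠ -(m : ℂ)) (hx : ‖k / (α + k)‖ < 1) :
    ∑' n : ℕ, ((ascPochhammer ℂ n).eval (α + k + 1) * (ascPochhammer ℂ n).eval 2 /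
        ((ascPochhammer ℂ n).eval (k + 2) * (n.factorial : ℂ))) * (k / (α + k)) ^ n
    = (α + k) * (k + 1) / α :=
  gosper_strange_eval_general α k hαk hk hx
end

section
/- For every nonnegative integer m, setting a = -1-m (so b = 3a+1 = -2-3m and c = 3a = -3-3m), the terminating hypergeometric sum vanishes: ∑_{n=0}^{3m+2} [(a)_n (3a+1)_n / ((3a)_n · n!)] · (3/2)^n = 0. -/
/-!
With `a = -(m+1)` and `c = 3a`, the ratio `(c+1)_n / (c)_n` telescopes to `(c+n)/c` and
`(a)_n / n! = (-1)^n (m+1).choose n`. The series is therefore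
`c⁻¹ ∑ (m+1).choose n (-x)^n (c+n)`, which the binomial theorem and its derivative evaluate to
`(1-x)^m (c(1-x) - (m+1)x) / c`; at `x = 3/2` and `c = -3(m+1)` the bracket vanishes.
-/

open Finset Polynomial

theorem ascPochhammer_eval_mul_add_natCast {R : Type*} [CommSemiring R] (x : R) (n : ℕ) :
    (ascPochhammer R n).eval x * (x + n) = x * (ascPochhammer R n).eval (x + 1) := by
  rw [← ascPochhammer_succ_eval, ascPochhammer_succ_left, eval_mul, eval_X, eval_comp, eval_add,
    eval_X, eval_one]

theorem sum_range_choose_mul_pow_of_lt {R : Type*} [CommSemiring R] {N M : ℕ} (hNM : N < M)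
    (y : R) :
    ∑ n ∈ range M, (N.choose n : R) * y ^ n = (1 + y) ^ N := by
  rw [add_comm, add_pow, ← sum_subset (range_subset_range.mpr hNM)]
  · exact sum_congr rfl fun n _ => by ring
  · intro n _ hn
    rw [Nat.choose_eq_zero_of_lt (by simpa using hn), Nat.cast_zero, zero_mul]

theorem sum_range_choose_mul_pow_mul_of_lt {R : Type*} [CommRing R] {N M : ℕ} (hNM : N + 1 < M)
    (y : R) :
    ∑ n ∈ range M, ((N + 1).choose n : R) * y ^ n * n = (N + 1) * y * (1 + y) ^ N := by
  obtain ⟨M, rfl⟩ := Nat.exists_eq_add_of_lt (Nat.zero_lt_of_lt hNM)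
  have hterm (j : ℕ) : ((N + 1).choose (j + 1) : R) * y ^ (j + 1) * ↑(j + 1)
      = (N + 1) * y * ((N.choose j : R) * y ^ j) := by
    have h := congrArg (Nat.cast : ℕ → R) (Nat.add_one_mul_choose_eq N j)
    push_cast at h ⊢
    linear_combination (-y ^ (j + 1)) * h
  rw [zero_add, sum_range_succ', sum_congr rfl fun j _ => hterm j, ← mul_sum,
    sum_range_choose_mul_pow_of_lt (by omega)]
  simp

section Field

variable {K : Type*} [Field K]

theorem ascPochhammer_eval_add_one_div {x : K} (n : ℕ) (hx : x ≠ 0)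
    (hn : (ascPochhammer K n).eval x ≠ 0) :
    (ascPochhammer K n).eval (x + 1) / (ascPochhammer K n).eval x = (x + n) / x := by
  rw [div_eq_div_iff hn hx]
  linear_combination (ascPochhammer_eval_mul_add_natCast x n).symm

variable [CharZero K]

theorem ascPochhammer_eval_neg_natCast_div_factorial (N n : ℕ) :
    (ascPochhammer K n).eval (-(N : K)) / n.factorial = (-1) ^ n * N.choose n := by
  rw [ascPochhammer_eval_neg_eq_descPochhammer, descPochhammer_eval_eq_descFactorial,
    Nat.descFactorial_eq_factorial_mul_choose, Nat.cast_mul, mul_div_assoc,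
    mul_div_cancel_left₀ _ (Nat.cast_ne_zero.mpr n.factorial_ne_zero)]

theorem ascPochhammer_eval_neg_natCast_ne_zero_s7 {N n : ℕ} (h : n ≤ N) :
    (ascPochhammer K n).eval (-(N : K)) ≠ 0 := by
  rw [ne_eq, ascPochhammer_eval_eq_zero_iff]
  rintro ⟨j, hj, hjN⟩
  rw [neg_neg, Nat.cast_inj] at hjN
  omega

theorem sum_hypergeometric_neg_natCast_add_one {k M : ℕ} (hkM : k + 1 < M) {c : K} (x : K)
    (hc : ∀ n < M, (ascPochhammer K n).eval c ≠ 0) :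
    ∑ n ∈ range M,
      ((ascPochhammer K n).eval (-((k + 1 : ℕ) : K)) * (ascPochhammer K n).eval (c + 1) /
        ((ascPochhammer K n).eval c * (n.factorial : K))) * x ^ n
    = (1 - x) ^ k * (c * (1 - x) - (k + 1) * x) / c := by
  have hc0 : c ≠ 0 := by simpa using hc 1 (by omega)
  have hterm : ∀ n ∈ range M,
      (ascPochhammer K n).eval (-((k + 1 : ℕ) : K)) * (ascPochhammer K n).eval (c + 1) /
        ((ascPochhammer K n).eval c * (n.factorial : K)) * x ^ n
      = (((k + 1).choose n : K) * (-x) ^ n * c + ((k + 1).choose n : K) * (-x) ^ n * n) / c := by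
    intro n hn
    calc _ = (ascPochhammer K n).eval (-((k + 1 : ℕ) : K)) / n.factorial *
            ((ascPochhammer K n).eval (c + 1) / (ascPochhammer K n).eval c) * x ^ n := by ring
      _ = (-1) ^ n * (k + 1).choose n * ((c + n) / c) * x ^ n := by
        rw [ascPochhammer_eval_neg_natCast_div_factorial,
          ascPochhammer_eval_add_one_div n hc0 (hc n (mem_range.mp hn))]
      _ = _ := by rw [neg_pow]; ring
  rw [sum_congr rfl hterm, ← sum_div, sum_add_distrib, ← sum_mul,
    sum_range_choose_mul_pow_of_lt hkM, sum_range_choose_mul_pow_mul_of_lt hkM]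
  ring

end Field

/-- Formula (1,3,3-3)(i), case `a = -1-m`: the terminating series
`₂F₁(a, 3a+1; 3a; 3/2)` vanishes. -/
theorem case1_vanishing (m : ℕ) :
    ∑ n ∈ Finset.range (3 * m + 2 + 1),
      ((ascPochhammer ℚ n).eval (-1 - (m : ℚ)) *
        (ascPochhammer ℚ n).eval (3 * (-1 - (m : ℚ)) + 1) /
        ((ascPochhammer ℚ n).eval (3 * (-1 - (m : ℚ))) * (n.factorial : ℚ))) * (3 / 2 : ℚ) ^ n
    = 0 := by
  have hc : 3 * (-1 - (m : ℚ)) = -((3 * m + 3 : ℕ) : ℚ) := by push_cast; ring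
  have ha : -1 - (m : ℚ) = -((m + 1 : ℕ) : ℚ) := by push_cast; ring
  rw [hc, ha, sum_hypergeometric_neg_natCast_add_one (by omega) _
    fun n hn => ascPochhammer_eval_neg_natCast_ne_zero_s7 (by omega), div_eq_zero_iff]
  left
  push_cast
  ring
end

section
/- For every nonnegative integer m, setting a = -2/3 - m (so 3a+1 = -1-3m and 3a = -2-3m), the terminating hypergeometric sum satisfies ∑_{n=0}^{3m+1} [(a)_n (3a+1)_n / ((3a)_n · n!)] · (3/2)^n = (-3)^{3m} (2/3)_m (7/3)_{2m} / (2^{3m+1} (3)_{3m}). -/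
noncomputable def Tm (m n : ℕ) : ℚ :=
  ((ascPochhammer ℚ n).eval (-2/3 - (m : ℚ)) *
    (ascPochhammer ℚ n).eval (3 * (-2/3 - (m : ℚ)) + 1) /
    ((ascPochhammer ℚ n).eval (3 * (-2/3 - (m : ℚ))) * (n.factorial : ℚ))) * (3 / 2 : ℚ) ^ n

lemma poch_succ_left_eval (n : ℕ) (x : ℚ) :
    (ascPochhammer ℚ (n+1)).eval x = x * (ascPochhammer ℚ n).eval (x+1) := by
  rw [ascPochhammer_succ_left, Polynomial.eval_mul, Polynomial.eval_X, Polynomial.eval_comp]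
  simp

lemma poch_add_two (n : ℕ) (x : ℚ) :
    (ascPochhammer ℚ (n+2)).eval x =
      (ascPochhammer ℚ n).eval x * ((x + n) * (x + n + 1)) := by
  rw [show n+2 = (n+1)+1 from rfl, ascPochhammer_succ_eval, ascPochhammer_succ_eval]
  push_cast; ring

lemma poch_add_three (n : ℕ) (x : ℚ) :
    (ascPochhammer ℚ (n+3)).eval x =
      (ascPochhammer ℚ n).eval x * ((x + n) * (x + n + 1) * (x + n + 2)) := by
  rw [show n+3 = (n+2)+1 from rfl, ascPochhammer_succ_eval, poch_add_two]
  push_cast; ring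

lemma poch_three_left (n : ℕ) (x : ℚ) :
    (ascPochhammer ℚ (n+3)).eval x =
      x * (x+1) * (x+2) * (ascPochhammer ℚ n).eval (x+3) := by
  rw [show n+3 = (n+2)+1 from rfl, poch_succ_left_eval,
    show n+2 = (n+1)+1 from rfl, poch_succ_left_eval, poch_succ_left_eval,
    show x+1+1+1 = x+3 by ring]
  ring

lemma poch_ne_zero {k : ℕ} {x : ℚ} (h : ∀ i < k, x + i ≠ 0) :
    (ascPochhammer ℚ k).eval x ≠ 0 := by
  induction k with
  | zero => simp
  | succ n ih =>
    rw [ascPochhammer_succ_eval]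
    exact mul_ne_zero (ih fun i hi => h i (hi.trans (Nat.lt_succ_self n)))
      (h n (Nat.lt_succ_self n))

lemma C_ne_zero (m k : ℕ) (hk : k ≤ 3*m+1) :
    (ascPochhammer ℚ k).eval (3 * (-2/3 - (m : ℚ))) ≠ 0 := by
  apply poch_ne_zero
  intro i hi
  have h1 : (i:ℚ) ≤ 3*m := by
    have : i ≤ 3*m := by omega
    exact_mod_cast this
  intro h; nlinarith


lemma ratioA (m k : ℕ) (hk : k ≤ 3*m) :
    Tm m (k+1) = (3*(k:ℚ) - 3*m - 2) * ((k:ℚ) - 3*m - 1)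
      / (((k:ℚ) - 3*m - 2) * ((k:ℚ)+1) * 2) * Tm m k := by
  have hC : (ascPochhammer ℚ k).eval (3 * (-2/3 - (m : ℚ))) ≠ 0 :=
    C_ne_zero m k (by omega)
  have hF : ((k.factorial : ℚ)) ≠ 0 := by exact_mod_cast k.factorial_ne_zero
  have hm0 : (0:ℚ) ≤ m := Nat.cast_nonneg m
  have hkQ : (k:ℚ) ≤ 3*m := by exact_mod_cast hk
  have h1 : (k:ℚ) - 3*m - 2 ≠ 0 := by intro h; nlinarith
  have h3 : ((k:ℚ)+1) ≠ 0 := by positivity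
  rw [show (3:ℚ) * (-2/3 - (m:ℚ)) = -2 - 3*(m:ℚ) from by ring] at hC
  simp only [Tm, ascPochhammer_succ_eval, Nat.factorial_succ,
    show (3:ℚ) * (-2/3 - (m:ℚ)) = -2 - 3*(m:ℚ) from by ring]
  push_cast
  set A := (ascPochhammer ℚ k).eval (-2/3 - (m:ℚ)) with hA
  set B := (ascPochhammer ℚ k).eval (-2 - 3*(m:ℚ) + 1) with hB
  set C := (ascPochhammer ℚ k).eval (-2 - 3*(m:ℚ)) with hCdef
  have h4 : -2 - 3*(m:ℚ) + (k:ℚ) ≠ 0 := by intro h; nlinarith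
  field_simp
  ring

lemma lemA (m : ℕ) : ∀ k, k ≤ 3*m+1 →
    ∑ n ∈ Finset.range (k+1), Tm m n
      = (3*(k:ℚ) - 3*m - 2) / ((k:ℚ) - 3*m - 2) * Tm m k := by
  intro k
  induction k with
  | zero =>
    intro _
    have h0 : Tm m 0 = 1 := by simp [Tm]
    have hne : -(3:ℚ)*m - 2 ≠ 0 := by
      have : (0:ℚ) ≤ m := Nat.cast_nonneg m
      intro h; nlinarith
    simp only [zero_add, Finset.sum_range_one, h0, Nat.cast_zero, mul_one]
    rw [show (3:ℚ)*0 - 3*m - 2 = -3*(m:ℚ) - 2 by ring,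
      show (0:ℚ) - 3*m - 2 = -3*(m:ℚ) - 2 by ring, div_self hne]
  | succ k ih =>
    intro hk
    rw [Finset.sum_range_succ, ih (by omega), ratioA m k (by omega)]
    have hm0 : (0:ℚ) ≤ m := Nat.cast_nonneg m
    have hkQ : (k:ℚ) ≤ 3*m := by
      have : k ≤ 3*m := by omega
      exact_mod_cast this
    have h1 : (k:ℚ) - 3*m - 2 ≠ 0 := by intro h; nlinarith
    have h2 : ((k:ℚ)+1) - 3*m - 2 ≠ 0 := by intro h; nlinarith
    have h3 : ((k:ℚ)+1) ≠ 0 := by positivity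
    have key : (3*(k:ℚ) - 3*m - 2) / ((k:ℚ) - 3*m - 2)
        + (3*(k:ℚ) - 3*m - 2) * ((k:ℚ) - 3*m - 1)
          / (((k:ℚ) - 3*m - 2) * ((k:ℚ)+1) * 2)
        = (3*((k:ℚ)+1) - 3*m - 2) / (((k:ℚ)+1) - 3*m - 2)
          * ((3*(k:ℚ) - 3*m - 2) * ((k:ℚ) - 3*m - 1)
            / (((k:ℚ) - 3*m - 2) * ((k:ℚ)+1) * 2)) := by
      field_simp
      ring
    push_cast
    linear_combination key * Tm m k

set_option maxHeartbeats 1000000 in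
lemma lemBcore (m : ℕ) :
    -(6*(m:ℚ)+1) * ((ascPochhammer ℚ (3*m+1)).eval (-2/3 - (m:ℚ))
        * (ascPochhammer ℚ (3*m+1)).eval (3*(-2/3 - (m:ℚ)) + 1)
        * (3/2:ℚ)^(3*m+1) * ((2:ℚ)^(3*m+1) * (ascPochhammer ℚ (3*m)).eval (3:ℚ)))
    = (-3:ℚ)^(3*m) * (ascPochhammer ℚ m).eval (2/3:ℚ)
        * (ascPochhammer ℚ (2*m)).eval (7/3:ℚ)
        * ((ascPochhammer ℚ (3*m+1)).eval (3*(-2/3 - (m:ℚ)))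
            * (((3*m+1).factorial : ℚ))) := by
  induction m with
  | zero => norm_num [ascPochhammer_one]
  | succ m ih =>
    have eA : (ascPochhammer ℚ (3*m+4)).eval (-2/3 - ((m:ℚ)+1))
        = (-2/3 - ((m:ℚ)+1)) * ((ascPochhammer ℚ (3*m+1)).eval (-2/3 - (m:ℚ))
            * ((-2/3 - (m:ℚ) + (3*(m:ℚ)+1)) * (-2/3 - (m:ℚ) + (3*(m:ℚ)+1) + 1))) := by
      rw [show 3*m+4 = (3*m+3)+1 from rfl, poch_succ_left_eval,
        show (-2/3 - ((m:ℚ)+1)) + 1 = -2/3 - (m:ℚ) by ring,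
        show 3*m+3 = (3*m+1)+2 from rfl, poch_add_two]
      push_cast
      ring
    have eB : (ascPochhammer ℚ (3*m+4)).eval (3 * (-2/3 - ((m:ℚ)+1)) + 1)
        = ((-3*(m:ℚ)-4) * (-3*(m:ℚ)-3) * (-3*(m:ℚ)-2))
            * (ascPochhammer ℚ (3*m+1)).eval (3 * (-2/3 - (m:ℚ)) + 1) := by
      rw [show 3*m+4 = (3*m+1)+3 from rfl, poch_three_left,
        show 3 * (-2/3 - ((m:ℚ)+1)) + 1 + 3 = 3 * (-2/3 - (m:ℚ)) + 1 by ring]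
      ring
    have eC : (ascPochhammer ℚ (3*m+4)).eval (3 * (-2/3 - ((m:ℚ)+1)))
        = ((-3*(m:ℚ)-5) * (-3*(m:ℚ)-4) * (-3*(m:ℚ)-3))
            * (ascPochhammer ℚ (3*m+1)).eval (3 * (-2/3 - (m:ℚ))) := by
      rw [show 3*m+4 = (3*m+1)+3 from rfl, poch_three_left,
        show 3 * (-2/3 - ((m:ℚ)+1)) + 3 = 3 * (-2/3 - (m:ℚ)) by ring]
      ring
    have eF : (((3*m+4).factorial : ℚ))
        = (3*(m:ℚ)+4)*(3*(m:ℚ)+3)*(3*(m:ℚ)+2)*(((3*m+1).factorial : ℚ)) := by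
      rw [show 3*m+4 = (3*m+3)+1 from rfl, Nat.factorial_succ,
        show 3*m+3 = (3*m+2)+1 from rfl, Nat.factorial_succ,
        show 3*m+2 = (3*m+1)+1 from rfl, Nat.factorial_succ]
      push_cast
      ring
    have e1 : (ascPochhammer ℚ (m+1)).eval (2/3 : ℚ)
        = (ascPochhammer ℚ m).eval (2/3 : ℚ) * (2/3 + (m:ℚ)) := ascPochhammer_succ_eval m _
    have e2 : (ascPochhammer ℚ (2*m+2)).eval (7/3 : ℚ)
        = (ascPochhammer ℚ (2*m)).eval (7/3 : ℚ)
            * ((7/3 + 2*(m:ℚ)) * (7/3 + 2*(m:ℚ) + 1)) := by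
      rw [poch_add_two]
      push_cast
      ring
    have e3 : (ascPochhammer ℚ (3*m+3)).eval (3 : ℚ)
        = (ascPochhammer ℚ (3*m)).eval (3 : ℚ)
            * ((3 + 3*(m:ℚ)) * (3 + 3*(m:ℚ) + 1) * (3 + 3*(m:ℚ) + 2)) := by
      rw [poch_add_three]
      push_cast
      ring
    refine mul_left_cancel₀ (a := (6*(m:ℚ)+1)) (by positivity) ?_
    rw [show 3*(m+1)+1 = 3*m+4 from by ring, show 3*(m+1) = 3*m+3 from by ring,
      show 2*(m+1) = 2*m+2 from by ring]
    push_cast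
    rw [eA, eB, eC, eF, e1, e2, e3,
      show ((3:ℚ)/2)^(3*m+4) = (3/2)^(3*m+1)*(3/2)^3 from by
        rw [show 3*m+4 = 3*m+1+3 from by ring, pow_add],
      show ((2:ℚ))^(3*m+4) = 2^(3*m+1)*2^3 from by
        rw [show 3*m+4 = 3*m+1+3 from by ring, pow_add],
      show ((-3:ℚ))^(3*m+3) = (-3)^(3*m)*(-3)^3 from by
        rw [show 3*m+3 = 3*m+3 from rfl, pow_add]]
    linear_combination ((6*(m:ℚ)+7)
      * ((-2/3 - ((m:ℚ)+1)) * ((-2/3 - (m:ℚ) + (3*(m:ℚ)+1)) * (-2/3 - (m:ℚ) + (3*(m:ℚ)+1) + 1)))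
      * ((-3*(m:ℚ)-4)*(-3*(m:ℚ)-3)*(-3*(m:ℚ)-2)) * 27
      * ((3 + 3*(m:ℚ)) * (3 + 3*(m:ℚ) + 1) * (3 + 3*(m:ℚ) + 2))) * ih

lemma lemB (m : ℕ) :
    -(6*(m:ℚ)+1) * Tm m (3*m+1)
      = (-3 : ℚ) ^ (3 * m) * (ascPochhammer ℚ m).eval (2/3 : ℚ) *
        (ascPochhammer ℚ (2 * m)).eval (7/3 : ℚ) /
        ((2 : ℚ) ^ (3 * m + 1) * (ascPochhammer ℚ (3 * m)).eval (3 : ℚ)) := by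
  have hC : (ascPochhammer ℚ (3*m+1)).eval (3 * (-2/3 - (m : ℚ))) ≠ 0 :=
    C_ne_zero m (3*m+1) le_rfl
  have hF : (((3*m+1).factorial : ℚ)) ≠ 0 := by
    exact_mod_cast (3*m+1).factorial_ne_zero
  have hP3 : (ascPochhammer ℚ (3*m)).eval (3 : ℚ) ≠ 0 :=
    ne_of_gt (ascPochhammer_pos _ _ (by norm_num))
  have h2p : ((2:ℚ))^(3*m+1) ≠ 0 := by positivity
  have key := lemBcore m
  rw [Tm, div_mul_eq_mul_div, mul_div_assoc',
    div_eq_div_iff (mul_ne_zero hC hF) (mul_ne_zero h2p hP3)]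
  linear_combination key

/-- Formula (1,3,3-3)(i), case `a = -2/3-m`:
`₂F₁(a, 3a+1; 3a; 3/2) = (-3)^{3m} (2/3)_m (7/3)_{2m} / (2^{3m+1} (3)_{3m})`. -/
theorem case1_two_thirds (m : ℕ) :
    ∑ n ∈ Finset.range (3 * m + 1 + 1),
      ((ascPochhammer ℚ n).eval (-2/3 - (m : ℚ)) *
        (ascPochhammer ℚ n).eval (3 * (-2/3 - (m : ℚ)) + 1) /
        ((ascPochhammer ℚ n).eval (3 * (-2/3 - (m : ℚ))) * (n.factorial : ℚ))) * (3 / 2 : ℚ) ^ n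
    = (-3 : ℚ) ^ (3 * m) * (ascPochhammer ℚ m).eval (2/3 : ℚ) *
        (ascPochhammer ℚ (2 * m)).eval (7/3 : ℚ) /
        ((2 : ℚ) ^ (3 * m + 1) * (ascPochhammer ℚ (3 * m)).eval (3 : ℚ)) := by
  have h := lemA m (3*m+1) le_rfl
  have hcoef : (3*((3*m+1 : ℕ):ℚ) - 3*m - 2) / (((3*m+1 : ℕ):ℚ) - 3*m - 2)
      = -(6*(m:ℚ)+1) := by
    push_cast
    rw [show 3*(3*(m:ℚ)+1) - 3*m - 2 = 6*m+1 by ring,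
      show (3*(m:ℚ)+1) - 3*m - 2 = -1 by ring, div_neg, div_one]
  rw [hcoef] at h
  show ∑ n ∈ Finset.range (3*m+1+1), Tm m n = _
  rw [h, lemB]
end

section
/- For every nonnegative integer m, setting a = -1-m (so 4a+1 = -3-4m and 4a = -4-4m), the terminating hypergeometric sum vanishes: ∑_{n=0}^{4m+3} [(a)_n (4a+1)_n / ((4a)_n · n!)] · (4/3)^n = 0. -/
lemma asc_shift (x : ℚ) (n : ℕ) :
    (ascPochhammer ℚ n).eval (x + 1) * x = (ascPochhammer ℚ n).eval x * (x + n) := by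
  induction n with
  | zero => simp
  | succ n ih =>
    rw [ascPochhammer_succ_eval, ascPochhammer_succ_eval]
    push_cast
    linear_combination (x + 1 + (n : ℚ)) * ih

/-- Formula (1,4,4-1)(i), case `a = -1-m`: the terminating series
`₂F₁(a, 4a+1; 4a; 4/3)` vanishes. -/
theorem case2_vanishing (m : ℕ) :
    ∑ n ∈ Finset.range (4 * m + 3 + 1),
      ((ascPochhammer ℚ n).eval (-1 - (m : ℚ)) *
        (ascPochhammer ℚ n).eval (4 * (-1 - (m : ℚ)) + 1) /
        ((ascPochhammer ℚ n).eval (4 * (-1 - (m : ℚ))) * (n.factorial : ℚ))) * (4 / 3 : ℚ) ^ n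
    = 0 := by
  set a : ℚ := -1 - (m : ℚ) with ha
  set g : ℕ → ℚ := fun n =>
    3 * n * (ascPochhammer ℚ n).eval a * (4 / 3 : ℚ) ^ n / ((4 * a) * n.factorial) with hg
  have h4a : (4 : ℚ) * a ≠ 0 := by
    rw [ha]; intro h
    have : (m : ℚ) ≥ 0 := Nat.cast_nonneg m
    nlinarith
  have key : ∀ n ∈ Finset.range (4 * m + 3 + 1),
      ((ascPochhammer ℚ n).eval a * (ascPochhammer ℚ n).eval (4 * a + 1) /
        ((ascPochhammer ℚ n).eval (4 * a) * (n.factorial : ℚ))) * (4 / 3 : ℚ) ^ n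
      = g (n + 1) - g n := by
    intro n hn
    rw [Finset.mem_range] at hn
    have hne : (ascPochhammer ℚ n).eval (4 * a) ≠ 0 := by
      intro h
      rw [ascPochhammer_eval_eq_zero_iff] at h
      obtain ⟨k, hk, hkk⟩ := h
      have : (k : ℚ) = (4 * m + 4 : ℕ) := by rw [hkk, ha]; push_cast; ring
      have : k = 4 * m + 4 := by exact_mod_cast this
      omega
    have hfac : (n.factorial : ℚ) ≠ 0 := by
      exact_mod_cast n.factorial_ne_zero
    have hrel : (ascPochhammer ℚ n).eval (4 * a + 1)
        = (ascPochhammer ℚ n).eval (4 * a) * (4 * a + n) / (4 * a) := by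
      rw [eq_div_iff h4a]; exact asc_shift (4 * a) n
    rw [hrel, hg]
    simp only
    rw [ascPochhammer_succ_eval, Nat.factorial_succ, pow_succ]
    push_cast
    field_simp
    ring
  rw [Finset.sum_congr rfl key, Finset.sum_range_sub]
  have hz : (ascPochhammer ℚ (4 * m + 3 + 1)).eval a = 0 := by
    have : a = -((m + 1 : ℕ) : ℚ) := by rw [ha]; push_cast; ring
    rw [this]
    exact ascPochhammer_eval_neg_coe_nat_of_lt (by omega)
  simp [hg, hz]
end
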